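/- The sequence x_n, x_{n-1}, ..., x_{n-t} is a filter-regular sequence for S/I if and only if c_i(I) < ∞ for all i = 0,...,t. -/

import Mathlib

open MvPolynomial

noncomputable section

/-- Coercion of a natural number into `WithBot ℕ∞` (degrees, with `⊥ = -∞`, `⊤ = ∞`). -/
def natW (r : ℕ) : WithBot ℕ∞ := ((r : ℕ∞) : WithBot ℕ∞)

/-- The total degree `|a|` of an exponent vector. -/
def degOf {n : ℕ} (a : Fin n →₀ ℕ) : ℕ := a.sum fun _ e => e

variable {k : Type*} [Field k] {n : ℕ}

/-- The top degree in which the graded pieces of two ideals differ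
(`⊥` if they never differ, `⊤` if they differ in unboundedly many degrees). -/
def topDiff (I J : Ideal (MvPolynomial (Fin n) k)) : WithBot ℕ∞ :=
  sSup {x | ∃ r : ℕ, x = natW r ∧
    ¬ ∀ f : MvPolynomial (Fin n) k, f.IsHomogeneous r → (f ∈ I ↔ f ∈ J)}

/-- `I` is a homogeneous (graded) ideal. -/
def HomogIdeal (I : Ideal (MvPolynomial (Fin n) k)) : Prop :=
  ∀ f ∈ I, ∀ r : ℕ, homogeneousComponent r f ∈ I

/-- The maximal homogeneous ideal `𝔪 = (x₁, …, xₙ)`. -/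
def maxIdl (k : Type*) [Field k] (n : ℕ) : Ideal (MvPolynomial (Fin n) k) :=
  Ideal.span (Set.range X)

/-- The ideal `(I, z₁, …, z_i)`. -/
def partIdeal (I : Ideal (MvPolynomial (Fin n) k)) {m : ℕ}
    (z : Fin m → MvPolynomial (Fin n) k) (i : ℕ) : Ideal (MvPolynomial (Fin n) k) :=
  I ⊔ Ideal.span (z '' {j : Fin m | (j : ℕ) < i})

/-- `a_z^i(S/I) = sup { r : [(I,z₁,…,z_i) : z_{i+1}]_r ≠ (I,z₁,…,z_i)_r }`. -/
def aInv (I : Ideal (MvPolynomial (Fin n) k)) {m : ℕ}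
    (z : Fin m → MvPolynomial (Fin n) k) (i : Fin m) : WithBot ℕ∞ :=
  topDiff ((partIdeal I z (i : ℕ)).colon (Ideal.span {z i})) (partIdeal I z (i : ℕ))

/-- `z` is a filter-regular sequence for `S/I`: each `z_{i+1}` avoids every associated
prime of `(I,z₁,…,z_i)` other than the maximal homogeneous ideal. -/
def FilterRegular (I : Ideal (MvPolynomial (Fin n) k)) {m : ℕ}
    (z : Fin m → MvPolynomial (Fin n) k) : Prop :=
  ∀ i : Fin m, ∀ p : Ideal (MvPolynomial (Fin n) k),
    IsAssociatedPrime p (MvPolynomial (Fin n) k ⧸ partIdeal I z (i : ℕ)) →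
    p ≠ maxIdl k n → z i ∉ p

/-- The saturation `⋃_{m ≥ 1} (J : z^m)`. -/
def satIdeal (J : Ideal (MvPolynomial (Fin n) k)) (z : MvPolynomial (Fin n) k) :
    Ideal (MvPolynomial (Fin n) k) :=
  ⨆ m : ℕ, J.colon (Ideal.span {z ^ (m + 1)})

/-- `a <_drevlex b` for the degree reverse lexicographic order with `x₁ > x₂ > … > xₙ`. -/
def RevLexLT {n : ℕ} (a b : Fin n →₀ ℕ) : Prop :=
  degOf a < degOf b ∨
    (degOf a = degOf b ∧ ∃ j : Fin n, b j < a j ∧ ∀ l : Fin n, j < l → a l = b l)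

/-- The initial ideal of `I` with respect to the reverse lexicographic order:
the ideal generated by the leading monomials of the nonzero elements of `I`. -/
def initialIdeal (I : Ideal (MvPolynomial (Fin n) k)) : Ideal (MvPolynomial (Fin n) k) :=
  Ideal.span {g | ∃ f ∈ I, f ≠ 0 ∧ ∃ μ ∈ f.support,
    (∀ ν ∈ f.support, ν = μ ∨ RevLexLT ν μ) ∧ g = monomial μ (1 : k)}

/-- The evaluation `x_{n-i+1} = ⋯ = x_n = 0`. -/
def evalZero (k : Type*) [Field k] (n i : ℕ) :
    MvPolynomial (Fin n) k →ₐ[k] MvPolynomial (Fin n) k :=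
  aeval fun j : Fin n => if (j : ℕ) < n - i then X j else 0

/-- The evaluation `x_{n-i+1} = ⋯ = x_n = 0`, `x_{n-i} = 1`. -/
def evalOne (k : Type*) [Field k] (n i : ℕ) :
    MvPolynomial (Fin n) k →ₐ[k] MvPolynomial (Fin n) k :=
  aeval fun j : Fin n =>
    if (j : ℕ) < n - i - 1 then X j else if (j : ℕ) = n - i - 1 then 1 else 0

/-- `J_i`: the ideal obtained from `In(I)` by evaluating `x_{n-i+1} = ⋯ = x_n = 0`. -/
def Jlow (i : ℕ) (I : Ideal (MvPolynomial (Fin n) k)) : Ideal (MvPolynomial (Fin n) k) :=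
  Ideal.map (evalZero k n i) (initialIdeal I)

/-- `J̃_i`: the ideal obtained from `J_i` by the further evaluation `x_{n-i} = 1`. -/
def Jtil (i : ℕ) (I : Ideal (MvPolynomial (Fin n) k)) : Ideal (MvPolynomial (Fin n) k) :=
  Ideal.map (evalOne k n i) (initialIdeal I)

/-- `c_i(I) = sup { r : (J̃_i/J_i)_r ≠ 0 }`, computed in `S_i = k[x₁,…,x_{n-i}]`. -/
def cInv (i : ℕ) (I : Ideal (MvPolynomial (Fin n) k)) : WithBot ℕ∞ :=
  sSup {x | ∃ r : ℕ, x = natW r ∧ ∃ f : MvPolynomial (Fin n) k,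
    f ∈ Jtil i I ∧ f ∈ supported k {j : Fin n | (j : ℕ) < n - i} ∧
    f.IsHomogeneous r ∧ f ∉ Jlow i I}

/-- `r(I) = sup { r : (S_d/J_d)_r ≠ 0 }`. -/
def rInv (d : ℕ) (I : Ideal (MvPolynomial (Fin n) k)) : WithBot ℕ∞ :=
  sSup {x | ∃ r : ℕ, x = natW r ∧ ∃ f : MvPolynomial (Fin n) k,
    f ∈ supported k {j : Fin n | (j : ℕ) < n - d} ∧ f.IsHomogeneous r ∧ f ∉ Jlow d I}

/-- The partial regularity `reg_t(S/I)`, via its characterization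
`reg_t(S/I) = max_i a_z^i(S/I)` for any filter-regular sequence `z` of `t+1` linear forms
([T1, Proposition 2.2]; equal to `max { aᵢ(S/I) + i : i ≤ t }` in terms of local cohomology). -/
def regT (t : ℕ) (I : Ideal (MvPolynomial (Fin n) k)) : WithBot ℕ∞ :=
  sSup {x | ∃ z : Fin (t + 1) → MvPolynomial (Fin n) k,
    (∀ j, (z j).IsHomogeneous 1) ∧ FilterRegular I z ∧
    x = ⨆ i : Fin (t + 1), aInv I z i}

/-- The Castelnuovo–Mumford regularity `reg(S/I)`, via its characterization
`reg(S/I) = max { a_z^0, …, a_z^{d-1}, r_z(S/I) }` for any filter-regular sequence `z`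
of `d = dim S/I` linear forms ([BS, Theorem 1.10], [T1, Corollary 3.3]). -/
def regCM (I : Ideal (MvPolynomial (Fin n) k)) : WithBot ℕ∞ :=
  sSup {x | ∃ d : ℕ, ringKrullDim (MvPolynomial (Fin n) k ⧸ I) = natW d ∧
    ∃ z : Fin d → MvPolynomial (Fin n) k,
      (∀ j, (z j).IsHomogeneous 1) ∧ FilterRegular I z ∧
      x = (⨆ i : Fin d, aInv I z i) ⊔ topDiff ⊤ (I ⊔ Ideal.span (Set.range z))}

/-- The exponent vectors of the minimal monomial generators of a monomial ideal. -/
def minGens (I : Ideal (MvPolynomial (Fin n) k)) : Set (Fin n →₀ ℕ) :=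
  {μ | monomial μ (1 : k) ∈ I ∧
    ∀ ν : Fin n →₀ ℕ, monomial ν (1 : k) ∈ I → ν ≤ μ → ν = μ}

/-- `E_i`: the exponent vectors of the minimal generators of `In(I)` involving none of
the variables `x_{n-i+1}, …, x_n`. -/
def Evar (i : ℕ) (I : Ideal (MvPolynomial (Fin n) k)) : Set (Fin n →₀ ℕ) :=
  {μ ∈ minGens (initialIdeal I) | ∀ j : Fin n, n - i ≤ (j : ℕ) → μ j = 0}

/-- The set `F` of corners of the staircase determined by `E`:
vectors `a = max(v₁,…,v_s) - (1,…,1)` where `v j ∈ E`, the `j`-th coordinate of `v j`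
strictly exceeds that of `v h` for `h ≠ j`, and `a ≱ w` for all `w ∈ E`. -/
def corners {s : ℕ} (E : Set (Fin s →₀ ℕ)) : Set (Fin s →₀ ℕ) :=
  {a | (∃ v : Fin s → (Fin s →₀ ℕ), (∀ j, v j ∈ E) ∧
      (∀ j h : Fin s, h ≠ j → v h j < v j j) ∧
      ∀ l : Fin s, a l + 1 = Finset.univ.sup fun j => v j l) ∧
    ∀ w ∈ E, ¬ w ≤ a}

/-!
For `P = (I, xₙ, …, x_{n-i+1})` and `x = x_{n-i}`, filter-regularity of `x` on `S/P` says exactly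
that `P : x` and `P` agree in all large degrees: if `x` avoids the non-maximal associated primes,
then `(P : x)/P` is killed by a power of `𝔪`; conversely, if `(P : x)_r = P_r` for `r ≫ 0`, every
associated prime containing `x` contains `𝔪`.

By Macaulay's theorem this comparison can be made on revlex initial ideals, and for the reverse
lexicographic order (Bayer–Stillman) `In(P) = In(I) + (xₙ, …, x_{n-i+1})` and
`In(P : x) = In(P) : x`. So the condition is that the monomials `σ ∉ In(P)` with `σ x ∈ In(P)` have
bounded degree. Walking along the powers of `x`, this amounts to bounding the degrees of the
monomials of `k[x₁, …, x_{n-i}]` that lie in `In(P) : x^∞` but not in `In(P)`, which are exactly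
the monomials of `J̃ᵢ / Jᵢ`; that is `cᵢ(I) < ∞`.
-/

lemma degOf_eq_degree (a : Fin n →₀ ℕ) : degOf a = a.degree := rfl

lemma degOf_add (a b : Fin n →₀ ℕ) : degOf (a + b) = degOf a + degOf b :=
  map_add Finsupp.degree a b

namespace RevLexLT

variable {a b c : Fin n →₀ ℕ}

lemma exists_last_ne (h : a ≠ b) : ∃ j, a j ≠ b j ∧ ∀ l, j < l → a l = b l := by
  classical
  have hne : (Finset.univ.filter fun l => a l ≠ b l).Nonempty := by
    by_contra hc
    simp only [Finset.not_nonempty_iff_eq_empty, Finset.filter_eq_empty_iff, Finset.mem_univ,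
      not_not, true_implies] at hc
    exact h (Finsupp.ext hc)
  refine ⟨_, (Finset.mem_filter.mp (Finset.max'_mem _ hne)).2, fun l hl => ?_⟩
  by_contra hc
  exact (Finset.le_max' _ l (by simpa using hc)).not_gt hl

lemma irrefl (a : Fin n →₀ ℕ) : ¬ RevLexLT a a := by
  rintro (h | ⟨-, j, hj, -⟩) <;> exact lt_irrefl _ ‹_›

lemma trans (h₁ : RevLexLT a b) (h₂ : RevLexLT b c) : RevLexLT a c := by
  rcases h₁ with h₁ | ⟨hd₁, j₁, hj₁, he₁⟩ <;> rcases h₂ with h₂ | ⟨hd₂, j₂, hj₂, he₂⟩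
  · exact Or.inl (h₁.trans h₂)
  · exact Or.inl (hd₂ ▸ h₁)
  · exact Or.inl (hd₁ ▸ h₂)
  refine Or.inr ⟨hd₁.trans hd₂, max j₁ j₂, ?_, fun l hl => ?_⟩
  · rcases lt_trichotomy j₁ j₂ with h | rfl | h
    · rw [max_eq_right h.le, he₁ j₂ h]; exact hj₂
    · rw [max_self]; exact hj₂.trans hj₁
    · rw [max_eq_left h.le, ← he₂ j₁ h]; exact hj₁
  · rw [max_lt_iff] at hl
    exact (he₁ l hl.1).trans (he₂ l hl.2)

lemma trichotomous (a b : Fin n →₀ ℕ) : RevLexLT a b ∨ a = b ∨ RevLexLT b a := by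
  rcases lt_trichotomy (degOf a) (degOf b) with h | h | h
  · exact Or.inl (Or.inl h)
  · obtain rfl | hab := eq_or_ne a b
    · exact Or.inr (Or.inl rfl)
    obtain ⟨j, hj, he⟩ := exists_last_ne hab
    rcases hj.lt_or_gt with hj | hj
    · exact Or.inr (Or.inr (Or.inr ⟨h.symm, j, hj, fun l hl => (he l hl).symm⟩))
    · exact Or.inl (Or.inr ⟨h, j, hj, he⟩)
  · exact Or.inr (Or.inr (Or.inl h))

instance : IsStrictOrder (Fin n →₀ ℕ) RevLexLT where
  irrefl := irrefl
  trans _ _ _ := trans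

lemma add_right (h : RevLexLT a b) (c : Fin n →₀ ℕ) : RevLexLT (a + c) (b + c) := by
  rcases h with h | ⟨hd, j, hj, he⟩
  · exact Or.inl (by rw [degOf_add, degOf_add]; omega)
  · refine Or.inr ⟨by rw [degOf_add, degOf_add, hd], j, ?_, fun l hl => ?_⟩
    · simp only [Finsupp.add_apply]; omega
    · simp only [Finsupp.add_apply, he l hl]

lemma of_eq_above {u : Fin n} (hd : degOf a = degOf b) (hu : b u < a u)
    (he : ∀ w, u < w → a w = b w) : RevLexLT a b :=
  Or.inr ⟨hd, u, hu, he⟩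

end RevLexLT

def IsLeadExp (f : MvPolynomial (Fin n) k) (μ : Fin n →₀ ℕ) : Prop :=
  μ ∈ f.support ∧ ∀ ν ∈ f.support, ν = μ ∨ RevLexLT ν μ

namespace IsLeadExp

variable {f g : MvPolynomial (Fin n) k} {μ ν : Fin n →₀ ℕ}

lemma ne_zero (h : IsLeadExp f μ) : f ≠ 0 := by
  rintro rfl
  simpa using h.1

lemma unique (h₁ : IsLeadExp f μ) (h₂ : IsLeadExp f ν) : μ = ν := by
  rcases h₂.2 μ h₁.1 with h | h
  · exact h
  rcases h₁.2 ν h₂.1 with h' | h'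
  · exact h'.symm
  · exact absurd (h.trans h') (RevLexLT.irrefl μ)

lemma of_support_subset (h : IsLeadExp f μ) (hsub : g.support ⊆ f.support) (hμ : μ ∈ g.support) :
    IsLeadExp g μ :=
  ⟨hμ, fun ν hν => h.2 ν (hsub hν)⟩

lemma monomial_mul (h : IsLeadExp f μ) (τ : Fin n →₀ ℕ) :
    IsLeadExp (monomial τ 1 * f) (τ + μ) := by
  classical
  refine ⟨by simpa [coeff_monomial_mul] using h.1, fun ρ hρ => ?_⟩
  obtain ⟨τ', hτ', σ, hσ, rfl⟩ := Finset.mem_add.mp (support_mul _ _ hρ)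
  obtain rfl : τ = τ' := by simpa [eq_comm] using support_monomial_subset hτ'
  rcases h.2 σ hσ with rfl | hσ
  · exact Or.inl rfl
  · simpa [add_comm τ] using Or.inr (hσ.add_right τ)

end IsLeadExp

lemma exists_isLeadExp {f : MvPolynomial (Fin n) k} (hf : f ≠ 0) : ∃ μ, IsLeadExp f μ := by
  obtain ⟨ν₀, hν₀⟩ := support_nonempty.mpr hf
  obtain ⟨⟨μ, hμ⟩, -, hmax⟩ := (f.support.finite_toSet.wellFoundedOn
    (r := fun a b => RevLexLT b a)).has_min Set.univ ⟨⟨ν₀, hν₀⟩, trivial⟩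
  refine ⟨μ, hμ, fun ν hν => ?_⟩
  rcases RevLexLT.trichotomous ν μ with h | h | h
  · exact Or.inr h
  · exact Or.inl h
  · exact absurd h (hmax ⟨ν, hν⟩ trivial)

lemma isLeadExp_monomial (ν : Fin n →₀ ℕ) {c : k} (hc : c ≠ 0) : IsLeadExp (monomial ν c) ν := by
  classical
  simp [IsLeadExp, support_monomial, hc]

def leadExps (I : Ideal (MvPolynomial (Fin n) k)) : Set (Fin n →₀ ℕ) :=
  {μ | ∃ f ∈ I, IsLeadExp f μ}

section leadExps

variable {I J : Ideal (MvPolynomial (Fin n) k)} {f : MvPolynomial (Fin n) k} {μ ν : Fin n →₀ ℕ}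

lemma initialIdeal_eq_span_leadExps (I : Ideal (MvPolynomial (Fin n) k)) :
    initialIdeal I = Ideal.span ((fun μ => monomial μ (1 : k)) '' leadExps I) := by
  unfold initialIdeal
  congr 1
  ext g
  constructor
  · rintro ⟨f, hf, -, μ, hμ, hmax, rfl⟩
    exact ⟨μ, ⟨f, hf, hμ, hmax⟩, rfl⟩
  · rintro ⟨μ, ⟨f, hf, hlead⟩, rfl⟩
    exact ⟨f, hf, hlead.ne_zero, μ, hlead.1, hlead.2, rfl⟩

lemma mem_leadExps_of_le (hμ : μ ∈ leadExps I) (h : μ ≤ ν) : ν ∈ leadExps I := by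
  obtain ⟨f, hf, hlead⟩ := hμ
  refine ⟨monomial (ν - μ) 1 * f, I.mul_mem_left _ hf, ?_⟩
  simpa [tsub_add_cancel_of_le h] using hlead.monomial_mul (ν - μ)

lemma leadExps_mono (h : I ≤ J) : leadExps I ⊆ leadExps J :=
  fun _ ⟨f, hf, hlead⟩ => ⟨f, h hf, hlead⟩

lemma mem_leadExps_of_monomial_mem (h : monomial ν (1 : k) ∈ I) : ν ∈ leadExps I :=
  ⟨_, h, isLeadExp_monomial ν one_ne_zero⟩

end leadExps

section Homogeneous

variable {A B I : Ideal (MvPolynomial (Fin n) k)}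

lemma HomogIdeal.sup (hA : HomogIdeal A) (hB : HomogIdeal B) : HomogIdeal (A ⊔ B) := by
  intro f hf r
  obtain ⟨a, ha, b, hb, rfl⟩ := Submodule.mem_sup.mp hf
  rw [map_add]
  exact Submodule.add_mem_sup (hA a ha r) (hB b hb r)

lemma HomogIdeal.span_X (V : Set (Fin n)) :
    HomogIdeal (Ideal.span (X '' V : Set (MvPolynomial (Fin n) k))) := by
  intro f hf r
  rw [mem_ideal_span_X_image] at hf ⊢
  intro ν hν
  rw [support_homogeneousComponent, Finset.mem_filter] at hν
  exact hf ν hν.1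

attribute [local instance] MvPolynomial.gradedAlgebra in
lemma homogeneousComponent_mul_of_le {σ R : Type*} [CommRing R] {x : MvPolynomial σ R} {d r : ℕ}
    (hx : x.IsHomogeneous d) (h : d ≤ r) (f : MvPolynomial σ R) :
    homogeneousComponent r (x * f) = x * homogeneousComponent (r - d) f := by
  rw [← decomposition.decompose'_apply, ← decomposition.decompose'_apply]
  exact DirectSum.coe_decompose_mul_of_left_mem_of_le (𝒜 := homogeneousSubmodule σ R) hx h

lemma HomogIdeal.colon_span_singleton (hI : HomogIdeal I) {x : MvPolynomial (Fin n) k} {d : ℕ}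
    (hx : x.IsHomogeneous d) : HomogIdeal (I.colon (Ideal.span {x})) := by
  intro f hf r
  rw [Ideal.mem_colon_span_singleton, mul_comm] at hf ⊢
  simpa [homogeneousComponent_mul_of_le hx (Nat.le_add_left d r)] using hI _ hf (r + d)

lemma exists_isHomogeneous_isLeadExp (hI : HomogIdeal I) {μ : Fin n →₀ ℕ} (hμ : μ ∈ leadExps I) :
    ∃ f ∈ I, f.IsHomogeneous (degOf μ) ∧ IsLeadExp f μ := by
  obtain ⟨f, hf, hlead⟩ := hμ
  refine ⟨_, hI f hf (degOf μ), homogeneousComponent_isHomogeneous _ _,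
    hlead.of_support_subset ?_ ?_⟩
  · rw [support_homogeneousComponent]
    exact Finset.filter_subset _ _
  · rw [support_homogeneousComponent, Finset.mem_filter]
    exact ⟨hlead.1, rfl⟩

end Homogeneous

lemma MvPolynomial.IsHomogeneous.degOf_eq {f : MvPolynomial (Fin n) k} {r : ℕ}
    (hf : f.IsHomogeneous r) {ν : Fin n →₀ ℕ} (hν : ν ∈ f.support) : degOf ν = r :=
  (hf.degree_eq_sum_deg_support hν).symm

section Macaulay

variable {A B : Ideal (MvPolynomial (Fin n) k)}

lemma exists_sub_mem_of_isLeadExp (hB : HomogIdeal B) (hBA : B ≤ A) {r : ℕ}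
    (h : ∀ ν, degOf ν = r → ν ∈ leadExps A → ν ∈ leadExps B) {f : MvPolynomial (Fin n) k}
    {μ : Fin n →₀ ℕ} (hf : f.IsHomogeneous r) (hfA : f ∈ A) (hμ : IsLeadExp f μ) :
    ∃ f' ∈ A, f'.IsHomogeneous r ∧ f - f' ∈ B ∧ ∀ μ', IsLeadExp f' μ' → RevLexLT μ' μ := by
  obtain ⟨g, hgB, hg, hgμ⟩ :=
    exists_isHomogeneous_isLeadExp hB (h μ (hf.degOf_eq hμ.1) ⟨f, hfA, hμ⟩)
  rw [hf.degOf_eq hμ.1] at hg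
  set c := coeff μ f / coeff μ g
  refine ⟨f - C c * g, A.sub_mem hfA (A.mul_mem_left _ (hBA hgB)), hf.sub (hg.C_mul c),
    by simpa using B.mul_mem_left (C c) hgB, fun μ' hμ' => ?_⟩
  have hne : μ' ≠ μ := by
    rintro rfl
    refine mem_support_iff.mp hμ'.1 ?_
    simp [c, div_mul_cancel₀ _ (mem_support_iff.mp hgμ.1)]
  rcases Finset.mem_union.mp (support_sub _ _ _ hμ'.1) with h' | h'
  · exact (hμ.2 μ' h').resolve_left hne
  · exact (hgμ.2 μ' (support_smul (by rwa [C_mul'] at h'))).resolve_left hne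

lemma mem_of_leadExps_subset (hB : HomogIdeal B) (hBA : B ≤ A) {r : ℕ}
    (h : ∀ ν, degOf ν = r → ν ∈ leadExps A → ν ∈ leadExps B) {f : MvPolynomial (Fin n) k}
    (hf : f.IsHomogeneous r) (hfA : f ∈ A) : f ∈ B := by
  obtain rfl | hf0 := eq_or_ne f 0
  · exact B.zero_mem
  obtain ⟨μ, hμ⟩ := exists_isLeadExp hf0
  refine ((Finsupp.finite_of_degree_eq r).wellFoundedOn (r := RevLexLT)).induction
    (P := fun μ => ∀ f : MvPolynomial (Fin n) k, f.IsHomogeneous r → f ∈ A → IsLeadExp f μ → f ∈ B)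
    (hf.degOf_eq hμ.1) (fun μ _ IH f hf hfA hμ => ?_) f hf hfA hμ
  obtain ⟨f', hf'A, hf', hff', hlt⟩ := exists_sub_mem_of_isLeadExp hB hBA h hf hfA hμ
  rw [← sub_add_cancel f f']
  refine B.add_mem hff' ?_
  obtain rfl | hf'0 := eq_or_ne f' 0
  · exact B.zero_mem
  obtain ⟨μ', hμ'⟩ := exists_isLeadExp hf'0
  exact IH μ' (hf'.degOf_eq hμ'.1) (hlt μ' hμ') f' hf' hf'A hμ'

lemma homogeneous_mem_iff_leadExps (hA : HomogIdeal A) (hB : HomogIdeal B) (hBA : B ≤ A)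
    (r : ℕ) :
    (∀ f : MvPolynomial (Fin n) k, f.IsHomogeneous r → f ∈ A → f ∈ B) ↔
      ∀ ν, degOf ν = r → ν ∈ leadExps A → ν ∈ leadExps B := by
  refine ⟨fun h ν hν hνA => ?_, fun h _ => mem_of_leadExps_subset hB hBA h⟩
  obtain ⟨g, hgA, hg, hgν⟩ := exists_isHomogeneous_isLeadExp hA hνA
  exact ⟨g, h g (hν ▸ hg) hgA, hgν⟩

end Macaulay

section KeepVars

variable (p : Fin n → Prop) [DecidablePred p]

def keepVars : MvPolynomial (Fin n) k →ₐ[k] MvPolynomial (Fin n) k :=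
  aeval fun j => if p j then X j else 0

lemma keepVars_monomial (μ : Fin n →₀ ℕ) (c : k) :
    keepVars p (monomial μ c) = if ∀ j, μ j ≠ 0 → p j then monomial μ c else 0 := by
  rw [keepVars, aeval_monomial, monomial_eq, algebraMap_eq]
  split_ifs with h
  · congr 1
    exact Finsupp.prod_congr fun j hj => by rw [if_pos (h j (Finsupp.mem_support_iff.mp hj))]
  · push Not at h
    obtain ⟨j, hj, hpj⟩ := h
    rw [Finsupp.prod, Finset.prod_eq_zero (Finsupp.mem_support_iff.mpr hj) (by simp [hpj, hj]),
      mul_zero]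

lemma coeff_keepVars (ν : Fin n →₀ ℕ) (f : MvPolynomial (Fin n) k) :
    coeff ν (keepVars p f) = if ∀ j, ν j ≠ 0 → p j then coeff ν f else 0 := by
  classical
  induction f using MvPolynomial.induction_on' with
  | monomial μ c =>
    rw [keepVars_monomial]
    by_cases hμν : μ = ν
    · subst hμν; split_ifs <;> simp
    · split_ifs <;> simp [coeff_monomial, hμν]
  | add f g hf hg => simp only [map_add, coeff_add, hf, hg]; split_ifs <;> simp

lemma support_keepVars_subset (f : MvPolynomial (Fin n) k) :
    (keepVars p f).support ⊆ f.support := by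
  intro ν hν
  rw [mem_support_iff, coeff_keepVars] at hν
  rw [mem_support_iff]
  split_ifs at hν
  · exact hν
  · exact absurd rfl hν

lemma MvPolynomial.IsHomogeneous.keepVars {f : MvPolynomial (Fin n) k} {r : ℕ}
    (hf : f.IsHomogeneous r) : (keepVars p f).IsHomogeneous r :=
  fun _ hν => hf (mem_support_iff.mp (support_keepVars_subset p f (mem_support_iff.mpr hν)))

lemma sub_keepVars_mem {J : Ideal (MvPolynomial (Fin n) k)} (hJ : ∀ j, ¬ p j → X j ∈ J)
    (f : MvPolynomial (Fin n) k) : f - keepVars p f ∈ J := by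
  have : (Ideal.Quotient.mkₐ k J).comp (keepVars p) = Ideal.Quotient.mkₐ k J := by
    refine MvPolynomial.algHom_ext fun j => ?_
    simp only [keepVars, AlgHom.comp_apply, aeval_X]
    split_ifs with hj
    · rfl
    · exact (Ideal.Quotient.eq.mpr (by simpa using hJ j hj)).symm
  exact Ideal.Quotient.eq.mp (DFunLike.congr_fun this f).symm

lemma keepVars_mem {J : Ideal (MvPolynomial (Fin n) k)} (hJ : ∀ j, ¬ p j → X j ∈ J)
    {f : MvPolynomial (Fin n) k} (hf : f ∈ J) : keepVars p f ∈ J := by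
  simpa using J.sub_mem hf (sub_keepVars_mem p hJ f)

end KeepVars

section BayerStillman

variable {u : Fin n}

lemma IsLeadExp.apply_ne_zero {f : MvPolynomial (Fin n) k} {r : ℕ} {μ ν : Fin n →₀ ℕ}
    (hf : f.IsHomogeneous r) (hμ : IsLeadExp f μ) (hμu : μ u ≠ 0)
    (hμa : ∀ w, u < w → μ w = 0) (hν : ν ∈ f.support) (hνa : ∀ w, u < w → ν w = 0) :
    ν u ≠ 0 := by
  intro hνu
  rcases hμ.2 ν hν with rfl | h
  · exact hμu hνu
  refine RevLexLT.irrefl ν (h.trans (RevLexLT.of_eq_above (u := u) ?_ (by omega) fun w hw => ?_))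
  · rw [hf.degOf_eq hμ.1, hf.degOf_eq hν]
  · rw [hμa w hw, hνa w hw]

lemma mem_span_X_of_isLeadExp {g : MvPolynomial (Fin n) k} {r : ℕ} {μ : Fin n →₀ ℕ}
    (hg : g.IsHomogeneous r) (hμ : IsLeadExp g μ) (hμu : μ u ≠ 0)
    (habove : ∀ ρ ∈ g.support, ∀ w, u < w → ρ w = 0) : g ∈ Ideal.span {X u} := by
  rw [← Set.image_singleton, mem_ideal_span_X_image]
  exact fun ρ hρ => ⟨u, rfl, hμ.apply_ne_zero hg hμu (habove μ hμ.1) hρ (habove ρ hρ)⟩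

lemma IsLeadExp.of_X_mul {h : MvPolynomial (Fin n) k} {ν : Fin n →₀ ℕ}
    (hν : IsLeadExp (X u * h) (ν + Finsupp.single u 1)) : IsLeadExp h ν := by
  obtain ⟨ℓ, hℓ⟩ := exists_isLeadExp (right_ne_zero_of_mul hν.ne_zero)
  obtain rfl : ℓ = ν := by
    simpa [add_comm] using (hℓ.monomial_mul (Finsupp.single u 1)).unique hν
  exact hℓ

lemma apply_eq_zero_of_mem_support_keepVars {f : MvPolynomial (Fin n) k} {ρ : Fin n →₀ ℕ}
    (hρ : ρ ∈ (keepVars (· ≤ u) f).support) {w : Fin n} (hw : u < w) : ρ w = 0 := by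
  rw [mem_support_iff, coeff_keepVars] at hρ
  split_ifs at hρ with h
  · exact not_not.mp fun hρw => (h w hρw).not_gt hw
  · exact absurd rfl hρ

lemma monomial_mem_of_apply_ne_zero {J : Ideal (MvPolynomial (Fin n) k)} {ν : Fin n →₀ ℕ}
    {w : Fin n} (hw : ν w ≠ 0) (hX : X w ∈ J) : monomial ν (1 : k) ∈ J := by
  rw [← tsub_add_cancel_of_le (Finsupp.single_le_iff.mpr (Nat.one_le_iff_ne_zero.mpr hw)),
    ← mul_one (1 : k), ← monomial_mul]
  exact J.mul_mem_left _ hX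

lemma isLeadExp_keepVars_homogeneousComponent {a h : MvPolynomial (Fin n) k}
    {ν : Fin n →₀ ℕ} (hν : IsLeadExp (a + h * X u) ν) (hνu : ν u = 0)
    (habove : ∀ w, u < w → ν w = 0) :
    IsLeadExp (keepVars (· ≤ u) (homogeneousComponent (degOf ν) a)) ν := by
  classical
  have hcoeff : ∀ ρ, ρ u = 0 → coeff ρ (a + h * X u) = coeff ρ a := fun ρ hρ => by
    simp [coeff_mul_X', hρ]
  have hcoeff_g : ∀ ρ, coeff ρ (keepVars (· ≤ u) (homogeneousComponent (degOf ν) a)) =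
      if (∀ j, ρ j ≠ 0 → j ≤ u) ∧ degOf ρ = degOf ν then coeff ρ a else 0 := fun ρ => by
    simp only [coeff_keepVars, coeff_homogeneousComponent, ← degOf_eq_degree]
    split_ifs <;> simp_all
  refine ⟨?_, fun ρ hρ => ?_⟩
  · rw [mem_support_iff, hcoeff_g, if_pos ⟨fun j hj => not_lt.mp fun h => hj (habove j h), rfl⟩,
      ← hcoeff ν hνu]
    exact mem_support_iff.mp hν.1
  rw [mem_support_iff, hcoeff_g] at hρ
  split_ifs at hρ with hρ'
  swap; · exact absurd rfl hρ
  by_cases hρu : ρ u = 0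
  · exact hν.2 ρ (mem_support_iff.mpr (by rwa [hcoeff ρ hρu]))
  -- a surviving monomial divisible by `x_u` is revlex-smaller than `ν`
  refine Or.inr (RevLexLT.of_eq_above (u := u) hρ'.2 (by omega) fun w hw => ?_)
  rw [habove w hw]
  exact not_not.mp fun hρw => (hρ'.1 w hρw).not_gt hw

theorem mem_leadExps_sup_span_X_iff {J : Ideal (MvPolynomial (Fin n) k)} (hJ : HomogIdeal J)
    (hvars : ∀ w, u < w → X w ∈ J) {ν : Fin n →₀ ℕ} :
    ν ∈ leadExps (J ⊔ Ideal.span {X u}) ↔ ν ∈ leadExps J ∨ ν u ≠ 0 := by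
  refine ⟨fun hν => ?_, fun hν => hν.elim (fun h => leadExps_mono le_sup_left h) fun hνu =>
    mem_leadExps_of_monomial_mem (monomial_mem_of_apply_ne_zero hνu
      (Ideal.mem_sup_right (Ideal.mem_span_singleton_self _)))⟩
  by_cases hνu : ν u ≠ 0
  · exact Or.inr hνu
  by_cases habove : ∃ w, u < w ∧ ν w ≠ 0
  · obtain ⟨w, hw, hνw⟩ := habove
    exact Or.inl (mem_leadExps_of_monomial_mem (monomial_mem_of_apply_ne_zero hνw (hvars w hw)))
  push Not at hνu habove
  obtain ⟨f, hf, hν⟩ := hν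
  obtain ⟨a, ha, b, hb, rfl⟩ := Submodule.mem_sup.mp hf
  obtain ⟨h, rfl⟩ := Ideal.mem_span_singleton'.mp hb
  exact Or.inl ⟨_, keepVars_mem _ (fun j hj => hvars j (not_le.mp hj)) (hJ a ha _),
    isLeadExp_keepVars_homogeneousComponent hν hνu habove⟩

theorem mem_leadExps_colon_X_iff {P : Ideal (MvPolynomial (Fin n) k)} (hP : HomogIdeal P)
    (hvars : ∀ w, u < w → X w ∈ P) {ν : Fin n →₀ ℕ} :
    ν ∈ leadExps (P.colon (Ideal.span {(X u : MvPolynomial (Fin n) k)})) ↔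
      ν + Finsupp.single u 1 ∈ leadExps P := by
  constructor
  · rintro ⟨h, hh, hν⟩
    refine ⟨X u * h, by simpa [mul_comm] using Ideal.mem_colon_span_singleton.mp hh, ?_⟩
    rw [add_comm]
    exact hν.monomial_mul (Finsupp.single u 1)
  intro hμ
  by_cases habove : ∃ w, u < w ∧ ν w ≠ 0
  · obtain ⟨w, hw, hνw⟩ := habove
    refine mem_leadExps_of_monomial_mem (Ideal.mem_colon_span_singleton.mpr ?_)
    exact P.mul_mem_right _ (monomial_mem_of_apply_ne_zero hνw (hvars w hw))
  push Not at habove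
  obtain ⟨f, hfP, hf, hfμ⟩ := exists_isHomogeneous_isLeadExp hP hμ
  have hbelow : ∀ j, (ν + Finsupp.single u 1 : Fin n →₀ ℕ) j ≠ 0 → j ≤ u := fun j hj =>
    not_lt.mp fun hj' => hj (by simp [habove j hj', hj'.ne])
  have hgμ : IsLeadExp (keepVars (· ≤ u) f) (ν + Finsupp.single u 1) :=
    hfμ.of_support_subset (support_keepVars_subset _ f) (by
      rw [mem_support_iff, coeff_keepVars, if_pos hbelow]
      exact mem_support_iff.mp hfμ.1)
  -- `x_u` divides the leading monomial, hence (revlex) every monomial of `keepVars f`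
  obtain ⟨h, hh⟩ := Ideal.mem_span_singleton'.mp (mem_span_X_of_isLeadExp (hf.keepVars _) hgμ
    (by simp) fun ρ hρ w hw => apply_eq_zero_of_mem_support_keepVars hρ hw)
  refine ⟨h, Ideal.mem_colon_span_singleton.mpr ?_, IsLeadExp.of_X_mul (u := u) ?_⟩
  · rw [hh]
    exact keepVars_mem _ (fun j hj => hvars j (not_le.mp hj)) hfP
  · rwa [mul_comm, hh]

end BayerStillman

theorem mem_leadExps_sup_span_X_image_iff {I : Ideal (MvPolynomial (Fin n) k)} (hI : HomogIdeal I)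
    {V : Finset (Fin n)} (hV : IsUpperSet (V : Set (Fin n))) {ν : Fin n →₀ ℕ} :
    ν ∈ leadExps (I ⊔ Ideal.span (X '' (V : Set (Fin n)))) ↔ ν ∈ leadExps I ∨ ∃ w ∈ V, ν w ≠ 0 := by
  classical
  induction V using Finset.induction_on_min generalizing ν with
  | empty => simp
  | insert a V hmin IH =>
    have hV' : IsUpperSet (V : Set (Fin n)) := fun x y hxy hx => by
      have := hV hxy (Finset.mem_insert_of_mem hx)
      rcases Finset.mem_insert.mp this with rfl | hy
      · exact absurd (hxy.trans_lt (hmin x hx)) (lt_irrefl _)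
      · exact hy
    have hvars : ∀ w, a < w → X w ∈ I ⊔ Ideal.span (X '' (V : Set (Fin n))) := fun w hw => by
      have := hV hw.le (Finset.mem_insert_self a V)
      refine Ideal.mem_sup_right (Ideal.subset_span ⟨w, ?_, rfl⟩)
      exact (Finset.mem_insert.mp this).resolve_left hw.ne'
    rw [Finset.coe_insert, Set.image_insert_eq, Ideal.span_insert, sup_comm (Ideal.span _),
      ← sup_assoc, mem_leadExps_sup_span_X_iff (hI.sup (HomogIdeal.span_X _)) hvars, IH hV',
      Finset.exists_mem_insert]
    rw [or_assoc, @or_comm _ (ν a ≠ 0)]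

theorem exists_pow_mul_colon_le {R : Type*} [CommRing R] [IsNoetherianRing R] {P m : Ideal R}
    {x : R} (h : ∀ q, IsAssociatedPrime q (R ⧸ P) → x ∈ q → m ≤ q) :
    ∃ N, m ^ N * P.colon (Ideal.span {x}) ≤ P := by
  set M := Submodule.map (Submodule.mkQ P) (P.colon (Ideal.span {x}))
  have hrad : m ≤ (Module.annihilator R M).radical := by
    rw [← Ideal.sInf_minimalPrimes]
    refine le_sInf fun q hq => h q ?_ (hq.1.2 ?_)
    · exact associatedPrimes.subset_of_injective M.injective_subtype
        (Module.associatedPrimes.minimalPrimes_annihilator_subset_associatedPrimes R M hq)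
    · rw [Module.mem_annihilator]
      rintro ⟨_, y, hy, rfl⟩
      have : x * y ∈ P := by simpa [mul_comm] using Ideal.mem_colon_span_singleton.mp hy
      exact Subtype.ext ((Submodule.Quotient.mk_eq_zero P).mpr this)
  obtain ⟨N, hN⟩ := Ideal.exists_pow_le_of_le_radical_of_fg hrad (IsNoetherian.noetherian m)
  refine ⟨N, Ideal.mul_le.mpr fun a ha y hy => ?_⟩
  have := Module.mem_annihilator.mp (hN ha) ⟨_, Submodule.mem_map_of_mem hy⟩
  exact (Submodule.Quotient.mk_eq_zero P).mp (congrArg Subtype.val this)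

lemma sSup_natW_lt_top_iff {Q : ℕ → Prop} :
    sSup {x : WithBot ℕ∞ | ∃ r, x = natW r ∧ Q r} < ⊤ ↔ ∃ R, ∀ r, Q r → r ≤ R := by
  constructor
  · intro h
    have hle : ∀ r, Q r → natW r ≤ sSup {x : WithBot ℕ∞ | ∃ r, x = natW r ∧ Q r} :=
      fun r hr => le_sSup ⟨r, rfl, hr⟩
    generalize sSup {x : WithBot ℕ∞ | ∃ r, x = natW r ∧ Q r} = s at h hle
    induction s using WithBot.recBotCoe with
    | bot => exact ⟨0, fun r hr => by simpa [natW] using hle r hr⟩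
    | coe e =>
      induction e using ENat.recTopCoe with
      | top => simp at h
      | coe m => exact ⟨m, fun r hr => by simpa [natW] using hle r hr⟩
  · rintro ⟨R, hR⟩
    refine (sSup_le ?_).trans_lt (WithBot.coe_lt_coe.mpr (ENat.natCast_lt_top R))
    rintro _ ⟨r, rfl, hr⟩
    simpa [natW] using hR r hr

lemma topDiff_lt_top_iff {A B : Ideal (MvPolynomial (Fin n) k)} (hBA : B ≤ A) :
    topDiff A B < ⊤ ↔
      ∃ R, ∀ r, R < r → ∀ f : MvPolynomial (Fin n) k, f.IsHomogeneous r → f ∈ A → f ∈ B := by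
  rw [topDiff, sSup_natW_lt_top_iff]
  refine exists_congr fun R => ⟨fun h r hr f hf hfA => ?_, fun h r hr => ?_⟩
  · by_contra hfB
    exact absurd (h r fun H => hfB ((H f hf).mp hfA)) (not_le.mpr hr)
  · by_contra hRr
    exact hr fun f hf => ⟨h r (not_le.mp hRr) f hf, fun hfB => hBA hfB⟩

lemma maxIdl_eq_ker : maxIdl k n = RingHom.ker (constantCoeff (σ := Fin n) (R := k)) := by
  ext f
  rw [RingHom.mem_ker, constantCoeff_eq, ← pow_one (maxIdl k n), maxIdl,
    mem_pow_idealOfVars_iff']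
  simp [Finsupp.degree_eq_zero_iff]

lemma maxIdl_isMaximal : (maxIdl k n).IsMaximal := by
  rw [maxIdl_eq_ker]
  exact RingHom.ker_isMaximal_of_surjective _ fun c => ⟨C c, constantCoeff_C _ c⟩

lemma MvPolynomial.IsHomogeneous.mem_maxIdl_pow {f : MvPolynomial (Fin n) k} {r N : ℕ}
    (hf : f.IsHomogeneous r) (hN : N ≤ r) : f ∈ maxIdl k n ^ N :=
  (mem_pow_idealOfVars_iff _ _).mpr fun _ hν => hN.trans_eq (hf.degOf_eq hν).symm

lemma exists_mem_of_pow_mul_le {C P : Ideal (MvPolynomial (Fin n) k)} (hC : HomogIdeal C)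
    {N : ℕ} (h : maxIdl k n ^ N * C ≤ P) :
    ∃ R, ∀ r, R < r → ∀ f : MvPolynomial (Fin n) k, f.IsHomogeneous r → f ∈ C → f ∈ P := by
  classical
  obtain ⟨s, hs⟩ := IsNoetherian.noetherian C
  set D := s.sup totalDegree
  refine ⟨D + N, fun r hr f hf hfC => ?_⟩
  rw [← hs] at hfC
  obtain ⟨c, -, rfl⟩ := Submodule.mem_span_finset.mp hfC
  rw [← homogeneousComponent_eq_self hf, map_sum]
  refine P.sum_mem fun g hg => ?_
  have hgC : g ∈ C := hs ▸ Submodule.subset_span hg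
  -- with `g = ∑_{d ≤ D} g_d`, the degree-`r` part of `c g * g_d` is `(c g)_{r-d} * g_d ∈ 𝔪^N * C`
  have hsum : ∑ d ∈ Finset.range (D + 1), homogeneousComponent d g = g := by
    rw [← Finset.sum_subset (Finset.range_subset_range.mpr (Nat.succ_le_succ (Finset.le_sup hg)))
      fun d _ hd => homogeneousComponent_eq_zero _ _ (by simp at hd; omega)]
    exact sum_homogeneousComponent g
  rw [smul_eq_mul]
  nth_rw 2 [← hsum]
  rw [Finset.mul_sum, map_sum]
  refine P.sum_mem fun d hd => h ?_
  rw [Finset.mem_range] at hd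
  rw [mul_comm (c g),
    homogeneousComponent_mul_of_le (homogeneousComponent_isHomogeneous d g) (by omega)]
  exact Ideal.mul_mem_mul_rev ((homogeneousComponent_isHomogeneous _ _).mem_maxIdl_pow
    (by omega)) (hC g hgC d)

lemma mem_colon_bot_mk_iff {R : Type*} [CommRing R] {P : Ideal R} {r y : R} :
    r ∈ (⊥ : Submodule R (R ⧸ P)).colon {Ideal.Quotient.mk P y} ↔ r * y ∈ P := by
  rw [Submodule.mem_colon_singleton, Submodule.mem_bot, Algebra.smul_def,
    Ideal.Quotient.algebraMap_eq, ← map_mul, Ideal.Quotient.eq_zero_iff_mem]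

theorem filterRegular_iff_topDiff_colon_lt_top {P : Ideal (MvPolynomial (Fin n) k)}
    (hP : HomogIdeal P) {x : MvPolynomial (Fin n) k} {d : ℕ} (hx : x.IsHomogeneous d) :
    (∀ p, IsAssociatedPrime p (MvPolynomial (Fin n) k ⧸ P) → p ≠ maxIdl k n → x ∉ p) ↔
      topDiff (P.colon (Ideal.span {x})) P < ⊤ := by
  have hPC : P ≤ P.colon (Ideal.span {x}) := fun f hf =>
    Ideal.mem_colon_span_singleton.mpr (P.mul_mem_right _ hf)
  rw [topDiff_lt_top_iff hPC]
  constructor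
  · intro hreg
    obtain ⟨N, hN⟩ := exists_pow_mul_colon_le (m := maxIdl k n) fun q hq hxq => by
      by_contra hmq
      exact hreg q hq (fun h => hmq h.ge) hxq
    exact exists_mem_of_pow_mul_le (hP.colon_span_singleton hx) hN
  rintro ⟨R, hR⟩ p hp hpm hxp
  obtain ⟨hprime, y, rfl⟩ := isAssociatedPrime_iff.mp hp
  obtain ⟨y, rfl⟩ := Ideal.Quotient.mk_surjective y
  refine hpm (maxIdl_isMaximal.eq_of_le hprime.ne_top ?_).symm
  rw [maxIdl, Ideal.span_le]
  rintro _ ⟨j, rfl⟩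
  have hy : ∀ r, homogeneousComponent r y ∈ P.colon (Ideal.span {x}) := fun r =>
    hP.colon_span_singleton hx y (Ideal.mem_colon_span_singleton.mpr
      (by simpa [mul_comm] using mem_colon_bot_mk_iff.mp hxp)) r
  -- every homogeneous component of `x_j ^ (R + 1) * y` lies in `P : x` in a degree above `R`
  refine hprime.mem_of_pow_mem (R + 1) (mem_colon_bot_mk_iff.mpr ?_)
  rw [← sum_homogeneousComponent y, Finset.mul_sum]
  exact P.sum_mem fun r _ => hR (R + 1 + r) (by omega) _
    ((isHomogeneous_X_pow j (R + 1)).mul (homogeneousComponent_isHomogeneous r y))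
    (Ideal.mul_mem_left _ _ (hy r))

lemma exists_bound_colon_iff_exists_bound_saturation (Q : (Fin n →₀ ℕ) → Prop) (u : Fin n) :
    (∃ R, ∀ σ, R < degOf σ → Q (σ + Finsupp.single u 1) → Q σ) ↔
      ∃ R, ∀ σ c, Q (σ + Finsupp.single u c) → ¬ Q σ → degOf σ ≤ R := by
  refine exists_congr fun R => ⟨fun h σ c hc hσ => ?_, fun h σ hR h1 => ?_⟩
  · by_contra hR
    suffices ∀ c, ¬ Q (σ + Finsupp.single u c) from this c hc
    intro c
    induction c with
    | zero => simpa using hσ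
    | succ c ih =>
      refine fun hc' => ih (h _ ?_ (by rwa [add_assoc, ← Finsupp.single_add]))
      rw [degOf_add]
      omega
  · by_contra hσ
    exact absurd (h σ 1 h1 hσ) (not_le.mpr hR)

lemma topDiff_colon_X_lt_top_iff {P : Ideal (MvPolynomial (Fin n) k)} (hP : HomogIdeal P)
    {u : Fin n} (hvars : ∀ w, u < w → X w ∈ P) :
    topDiff (P.colon (Ideal.span {(X u : MvPolynomial (Fin n) k)})) P < ⊤ ↔
      ∃ R, ∀ σ c, σ + Finsupp.single u c ∈ leadExps P → σ ∉ leadExps P → degOf σ ≤ R := by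
  have hPC : P ≤ P.colon (Ideal.span {(X u : MvPolynomial (Fin n) k)}) := fun f hf =>
    Ideal.mem_colon_span_singleton.mpr (P.mul_mem_right _ hf)
  rw [topDiff_lt_top_iff hPC, ← exists_bound_colon_iff_exists_bound_saturation]
  refine exists_congr fun R => ⟨fun h σ hσ hσu => ?_, fun h r hr => ?_⟩
  · refine (homogeneous_mem_iff_leadExps (hP.colon_span_singleton (isHomogeneous_X k u)) hP hPC
      _).mp (h _ hσ) σ rfl ?_
    exact (mem_leadExps_colon_X_iff hP hvars).mpr hσu
  · refine (homogeneous_mem_iff_leadExps (hP.colon_span_singleton (isHomogeneous_X k u)) hP hPC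
      r).mpr fun ν hν hνC => h ν (hν ▸ hr) ((mem_leadExps_colon_X_iff hP hvars).mp hνC)

lemma map_initialIdeal_eq {I : Ideal (MvPolynomial (Fin n) k)}
    {φ : MvPolynomial (Fin n) k →ₐ[k] MvPolynomial (Fin n) k} {p : (Fin n →₀ ℕ) → Prop}
    [DecidablePred p] {g : (Fin n →₀ ℕ) → Fin n →₀ ℕ}
    (hφ : ∀ μ, φ (monomial μ 1) = if p μ then monomial (g μ) 1 else 0) :
    Ideal.map φ (initialIdeal I) =
      Ideal.span ((fun μ => monomial μ (1 : k)) '' (g '' {μ ∈ leadExps I | p μ})) := by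
  rw [initialIdeal_eq_span_leadExps, Ideal.map_span, Set.image_image]
  apply le_antisymm <;> rw [Ideal.span_le]
  · rintro _ ⟨μ, hμ, rfl⟩
    dsimp only
    rw [hφ]
    split_ifs with h
    · exact Ideal.subset_span ⟨g μ, ⟨μ, ⟨hμ, h⟩, rfl⟩, rfl⟩
    · exact Ideal.zero_mem _
  · rintro _ ⟨_, ⟨μ, ⟨hμ, h⟩, rfl⟩, rfl⟩
    exact Ideal.subset_span ⟨μ, hμ, by simp [hφ, h]⟩

def lastVars (n i : ℕ) : Finset (Fin n) := Finset.univ.filter fun w => n - i ≤ (w : ℕ)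

lemma mem_lastVars {i : ℕ} {w : Fin n} : w ∈ lastVars n i ↔ n - i ≤ (w : ℕ) := by
  simp [lastVars]

lemma isUpperSet_lastVars (n i : ℕ) : IsUpperSet (lastVars n i : Set (Fin n)) :=
  fun _ _ hvw hv => mem_lastVars.mpr ((mem_lastVars.mp hv).trans hvw)

lemma partIdeal_eq_sup_lastVars {t : ℕ} (ht : t < n) (I : Ideal (MvPolynomial (Fin n) k))
    {i : ℕ} (hi : i ≤ t + 1) :
    partIdeal I (fun j : Fin (t + 1) =>
        (X ⟨n - 1 - (j : ℕ), by omega⟩ : MvPolynomial (Fin n) k)) i =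
      I ⊔ Ideal.span (X '' (lastVars n i : Set (Fin n))) := by
  rw [partIdeal,
    ← Set.image_image (g := X) (f := fun j : Fin (t + 1) => (⟨n - 1 - j, by omega⟩ : Fin n))]
  congr 3
  ext w
  simp only [Set.mem_image, Set.mem_ofPred_eq, Finset.mem_coe, mem_lastVars]
  constructor
  · rintro ⟨j, hj, rfl⟩
    simp only
    omega
  · intro hw
    exact ⟨⟨n - 1 - w, by omega⟩, by simp only; omega, Fin.ext (by simp only; omega)⟩

lemma evalZero_eq_keepVars (i : ℕ) :
    evalZero k n i = keepVars fun j : Fin n => (j : ℕ) < n - i := rfl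

lemma evalOne_monomial {i : ℕ} (hi : i < n) (μ : Fin n →₀ ℕ) :
    evalOne k n i (monomial μ 1) = if ∀ j : Fin n, μ j ≠ 0 → (j : ℕ) < n - i then
      monomial (μ.erase ⟨n - i - 1, by omega⟩) 1 else 0 := by
  classical
  rw [evalOne, aeval_monomial, map_one, one_mul]
  split_ifs with h
  · rw [monomial_eq, C_1, one_mul, Finsupp.prod_fintype _ _ fun _ => pow_zero _,
      Finsupp.prod_fintype _ _ fun _ => pow_zero _]
    refine Finset.prod_congr rfl fun j _ => ?_
    by_cases hj : (j : ℕ) = n - i - 1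
    · rw [show j = ⟨n - i - 1, by omega⟩ from Fin.ext hj]
      simp
    rw [Finsupp.erase_ne fun h' => hj (congrArg Fin.val h')]
    by_cases hlt : (j : ℕ) < n - i - 1
    · simp [hlt]
    · have : μ j = 0 := by_contra fun h0 => by have := h j h0; omega
      simp [this]
  · push Not at h
    obtain ⟨j, hj, hji⟩ := h
    rw [Finsupp.prod, Finset.prod_eq_zero (Finsupp.mem_support_iff.mpr hj)]
    rw [if_neg (by omega), if_neg (by omega), zero_pow hj]

section cInv

variable {I : Ideal (MvPolynomial (Fin n) k)} {i : ℕ} {f : MvPolynomial (Fin n) k}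

lemma mem_Jlow_iff : f ∈ Jlow i I ↔ ∀ ν ∈ f.support,
    ∃ μ ∈ leadExps I, (∀ j, μ j ≠ 0 → (j : ℕ) < n - i) ∧ μ ≤ ν := by
  classical
  rw [Jlow, evalZero_eq_keepVars, map_initialIdeal_eq (g := id) fun μ => keepVars_monomial _ μ 1,
    mem_ideal_span_monomial_image]
  simp [and_assoc]

lemma mem_Jtil_iff (hi : i < n) : f ∈ Jtil i I ↔ ∀ ν ∈ f.support,
    ∃ μ ∈ leadExps I, (∀ j, μ j ≠ 0 → (j : ℕ) < n - i) ∧ μ.erase ⟨n - i - 1, by omega⟩ ≤ ν := by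
  classical
  rw [Jtil, map_initialIdeal_eq (evalOne_monomial hi), mem_ideal_span_monomial_image]
  simp [and_assoc]

lemma Finsupp.le_add_single_of_erase_le {α : Type*} [DecidableEq α] {μ σ : α →₀ ℕ} {u : α}
    (h : μ.erase u ≤ σ) : μ ≤ σ + Finsupp.single u (μ u) := by
  conv_lhs => rw [← Finsupp.erase_add_single u μ]
  exact add_le_add h le_rfl

lemma Finsupp.erase_add_single_le {α : Type*} [DecidableEq α] (σ : α →₀ ℕ) (u : α) (c : ℕ) :
    (σ + Finsupp.single u c).erase u ≤ σ := by
  intro j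
  rw [Finsupp.erase_apply]
  split_ifs with h
  · simp
  · simp [Ne.symm h]

lemma mem_leadExps_sup_lastVars_iff (hI : HomogIdeal I) {ν : Fin n →₀ ℕ} :
    ν ∈ leadExps (I ⊔ Ideal.span (X '' (lastVars n i : Set (Fin n)))) ↔
      ν ∈ leadExps I ∨ ¬ ∀ j, ν j ≠ 0 → (j : ℕ) < n - i := by
  rw [mem_leadExps_sup_span_X_image_iff hI (isUpperSet_lastVars n i)]
  simp only [mem_lastVars, not_forall, not_lt]
  exact or_congr_right ⟨fun ⟨w, hw, hνw⟩ => ⟨w, hνw, hw⟩, fun ⟨w, hνw, hw⟩ => ⟨w, hw, hνw⟩⟩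

lemma cInv_witness_iff (hI : HomogIdeal I) (hi : i < n) {r : ℕ} :
    (∃ f : MvPolynomial (Fin n) k, f ∈ Jtil i I ∧ f ∈ supported k {j : Fin n | (j : ℕ) < n - i} ∧
      f.IsHomogeneous r ∧ f ∉ Jlow i I) ↔
    ∃ σ c, degOf σ = r ∧
      σ + Finsupp.single ⟨n - i - 1, by omega⟩ c ∈
        leadExps (I ⊔ Ideal.span (X '' (lastVars n i : Set (Fin n)))) ∧
      σ ∉ leadExps (I ⊔ Ideal.span (X '' (lastVars n i : Set (Fin n)))) := by
  classical
  set u : Fin n := ⟨n - i - 1, by omega⟩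
  simp only [mem_leadExps_sup_lastVars_iff hI, not_or, not_not]
  constructor
  · rintro ⟨f, hfJ, hfs, hf, hfJ'⟩
    rw [mem_Jlow_iff] at hfJ'
    push Not at hfJ'
    obtain ⟨σ, hσ, hσmin⟩ := hfJ'
    have hσb : ∀ j, σ j ≠ 0 → (j : ℕ) < n - i := fun j hj => mem_supported.mp hfs
      ((mem_vars_iff_mem_support j).mpr ⟨σ, hσ, Finsupp.mem_support_iff.mpr hj⟩)
    obtain ⟨μ, hμ, hμb, hμσ⟩ := (mem_Jtil_iff hi).mp hfJ σ hσ
    exact ⟨σ, μ u, hf.degOf_eq hσ,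
      Or.inl (mem_leadExps_of_le hμ (Finsupp.le_add_single_of_erase_le hμσ)),
      fun hσI => hσmin σ hσI hσb le_rfl, hσb⟩
  · rintro ⟨σ, c, rfl, hQ, hσI, hσb⟩
    have hb : ∀ j, (σ + Finsupp.single u c) j ≠ 0 → (j : ℕ) < n - i := fun j hj => by
      by_cases hju : j = u
      · rw [hju]; simp only [u]; omega
      · exact hσb j (by simpa [Finsupp.single_apply, Ne.symm hju] using hj)
    have hμ := hQ.resolve_right (not_not.mpr hb)
    refine ⟨monomial σ 1, (mem_Jtil_iff hi).mpr fun ν hν => ?_, ?_,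
      isHomogeneous_monomial _ rfl, fun h => ?_⟩
    · obtain rfl : ν = σ := by simpa [support_monomial] using hν
      exact ⟨_, hμ, hb, Finsupp.erase_add_single_le _ u c⟩
    · rw [mem_supported, vars_monomial one_ne_zero]
      exact fun j hj => hσb j (Finsupp.mem_support_iff.mp hj)
    · obtain ⟨μ, hμI, -, hμσ⟩ := mem_Jlow_iff.mp h σ (by simp [support_monomial])
      exact hσI (mem_leadExps_of_le hμI hμσ)

theorem topDiff_colon_lt_top_iff_cInv_lt_top (hI : HomogIdeal I) (hi : i < n) :
    topDiff ((I ⊔ Ideal.span (X '' (lastVars n i : Set (Fin n)))).colon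
        (Ideal.span {(X ⟨n - i - 1, by omega⟩ : MvPolynomial (Fin n) k)}))
      (I ⊔ Ideal.span (X '' (lastVars n i : Set (Fin n)))) < ⊤ ↔ cInv i I < ⊤ := by
  have hvars : ∀ w, (⟨n - i - 1, by omega⟩ : Fin n) < w →
      X w ∈ I ⊔ Ideal.span (X '' (lastVars n i : Set (Fin n))) := fun w hw =>
    Ideal.mem_sup_right
      (Ideal.subset_span ⟨w, mem_lastVars.mpr (by simp [Fin.lt_def] at hw; omega), rfl⟩)
  rw [topDiff_colon_X_lt_top_iff (hI.sup (HomogIdeal.span_X _)) hvars, cInv, sSup_natW_lt_top_iff]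
  simp only [cInv_witness_iff hI hi]
  refine exists_congr fun R => ⟨fun h r ⟨σ, c, hσ, h1, h2⟩ => hσ ▸ h σ c h1 h2,
    fun h σ c h1 h2 => h _ ⟨σ, c, rfl, h1, h2⟩⟩

end cInv

/-- Corollary 3.3: `xₙ, x_{n-1}, …, x_{n-t}` is a filter-regular
sequence for `S/I` if and only if `c_i(I) < ∞` for all `i = 0, …, t`. -/
theorem stmt_5 {k : Type*} [Field k] {n : ℕ} (I : Ideal (MvPolynomial (Fin n) k))
    (hI : HomogIdeal I) (t : ℕ) (ht : t < n) :
    FilterRegular I (fun j : Fin (t + 1) =>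
        (X ⟨n - 1 - (j : ℕ), by omega⟩ : MvPolynomial (Fin n) k))
      ↔ ∀ i : Fin (t + 1), cInv (i : ℕ) I < ⊤ := by
  refine forall_congr' fun i => ?_
  have hi : (i : ℕ) < n := by omega
  have hu : (⟨n - 1 - (i : ℕ), by omega⟩ : Fin n) = ⟨n - i - 1, by omega⟩ :=
    Fin.ext (by simp; omega)
  dsimp only
  rw [partIdeal_eq_sup_lastVars ht I (by omega), hu,
    filterRegular_iff_topDiff_colon_lt_top (hI.sup (HomogIdeal.span_X _)) (isHomogeneous_X k _)]
  exact topDiff_colon_lt_top_iff_cInv_lt_top hI hi
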